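/- arXiv:2604.08740 — 2 statements merged into one kernel-verified Lean document; each statement's English description precedes it below -/
import Mathlib

section
/- Let q ≥ 2 and ζ_q : Part → Part as above. A partition ψ in the image of ζ_q has more than one preimage under ζ_q if and only if there exist r ≥ 0 and indices 0 < i₁ < i₂ with ψ_{(i₁−1)q+1} = ψ_{(i₁−1)q+2} = r+1 and ψ_{i₂q−1} = ψ_{i₂q} = r. -/
/- We model partitions as multisets of positive integers; splicing is multiset sum,
making this the free commutative monoid on the singleton partitions. -/

/-- The `i`-th entry (1-indexed) of a partition, listed in decreasing order, with
value `0` beyond the length of the partition. -/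
def Multiset.nthPart (ψ : Multiset ℕ+) (i : ℕ) : ℕ :=
  (((ψ.map ((↑·) : ℕ+ → ℕ)).sort (· ≤ ·)).reverse).getD (i - 1) 0

/-- The image of the singleton partition `[a]` under `ζ_q`: writing `a = k·q + l` with
`0 ≤ l < q`, it consists of `l` copies of `k + 1` and `q - l` copies of `k`
(copies of `0` being discarded). -/
def zetaPiece (q : ℕ) (a : ℕ+) : Multiset ℕ+ :=
  Multiset.replicate ((a : ℕ) % q) ⟨(a : ℕ) / q + 1, Nat.succ_pos _⟩ +
    if h : 0 < (a : ℕ) / q then Multiset.replicate (q - (a : ℕ) % q) ⟨(a : ℕ) / q, h⟩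
    else 0

/-- The monoid homomorphism `ζ_q : Part → Part`, determined on singleton partitions by
`[a] ↦ l·[k+1] + (q-l)·[k]` where `a = k·q + l`, `0 ≤ l < q`. -/
def zetaPart (q : ℕ) (ψ : Multiset ℕ+) : Multiset ℕ+ := ψ.bind (zetaPiece q)

/-- The standard preimage sequence: `φ_i = ψ_{(i-1)q+1} + ⋯ + ψ_{iq}`. -/
def stdPreimageFun (q : ℕ) (ψ : Multiset ℕ+) (i : ℕ) : ℕ :=
  ∑ j ∈ Finset.Icc ((i - 1) * q + 1) (i * q), ψ.nthPart j

/-! Write `φ*_j` for the number of parts of `φ` exceeding `j`. On these conjugates `ζ_q` is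
block summation, `(ζ_q φ)*_v = ∑_{i<q} φ*_{vq+i}`, so the preimages of `ψ` are the antitone
sequences with block sums `ψ*_v`. A preimage whose blocks all have spread at most one is the
balanced filling of these sums, and that filling is a preimage as soon as `ψ` is in the image;
so `ψ` has a second preimage iff some preimage has a block `r` of spread at least two. Refilling
block `r` of the balanced preimage greedily shows that this happens iff
`a q + 2 ≤ ψ*_r ≤ u q - 2` for some `a + 2 ≤ u` with `ψ*_{r+1} ≤ a q` and, if `r > 0`,
`u q ≤ ψ*_{r-1}`. Through `v < ψ_{p+1} ↔ p < ψ*_v` this is the condition on the entries of `ψ`,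
with `i₁ = a + 1` and `i₂ = u`. -/

open Finset

/-- Hermite's identity. -/
lemma Nat.sum_range_add_div {q : ℕ} (hq : 0 < q) (m : ℕ) : ∑ i ∈ range q, (m + i) / q = m := by
  induction m with
  | zero => exact sum_eq_zero fun i hi => Nat.div_eq_of_lt (by simpa using hi)
  | succ m ih =>
    have h := sum_range_succ' (fun i => (m + i) / q) q
    rw [sum_range_succ, ih, Nat.add_div_right _ hq] at h
    simp only [add_assoc, add_comm 1, add_zero] at h ⊢
    omega

lemma List.Pairwise.lt_getD_iff_lt_countP {l : List ℕ} (hl : l.Pairwise (· ≥ ·)) (v p : ℕ) :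
    v < l.getD p 0 ↔ p < l.countP (v < ·) := by
  induction l generalizing p with
  | nil => simp
  | cons a l ih =>
    rw [List.pairwise_cons] at hl
    have hnone : ¬ v < a → l.countP (v < ·) = 0 := fun ha =>
      List.countP_eq_zero.2 fun b hb => by have := hl.1 b hb; simp; omega
    cases p with
    | zero => by_cases ha : v < a <;> simp [ha, hnone]
    | succ p =>
      rw [List.getD_cons_succ, ih hl.2, List.countP_cons]
      by_cases ha : v < a <;> simp [ha, hnone]

namespace Multiset

/-- The conjugate partition indexed from `0`: `φ.conjPart j = φ'_{j+1}`. -/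
def conjPart (φ : Multiset ℕ+) (j : ℕ) : ℕ := (φ.filter fun a : ℕ+ => j < (a : ℕ)).card

@[simp]
lemma conjPart_zero : (0 : Multiset ℕ+).conjPart = 0 := rfl

@[simp]
lemma conjPart_add (φ₁ φ₂ : Multiset ℕ+) : (φ₁ + φ₂).conjPart = φ₁.conjPart + φ₂.conjPart := by
  funext j
  simp [conjPart, filter_add]

lemma conjPart_cons (a : ℕ+) (φ : Multiset ℕ+) (j : ℕ) :
    (a ::ₘ φ).conjPart j = φ.conjPart j + if j < (a : ℕ) then 1 else 0 := by
  by_cases h : j < (a : ℕ) <;> simp [conjPart, h]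

@[simp]
lemma conjPart_replicate (n : ℕ) (a : ℕ+) (j : ℕ) :
    (replicate n a).conjPart j = if j < (a : ℕ) then n else 0 := by
  induction n with
  | zero => simp [conjPart]
  | succ n ih => rw [replicate_succ, conjPart_cons, ih]; split_ifs <;> rfl

lemma antitone_conjPart (φ : Multiset ℕ+) : Antitone φ.conjPart :=
  fun _ _ hij => card_le_card <| monotone_filter_right _ fun _ h => lt_of_le_of_lt hij h

lemma exists_conjPart_eq_zero (φ : Multiset ℕ+) : ∃ N, φ.conjPart N = 0 := by
  refine ⟨(φ.map PNat.val).sum, ?_⟩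
  rw [conjPart, card_eq_zero, filter_eq_nil]
  exact fun a ha h => h.not_ge (le_sum_of_mem (mem_map_of_mem _ ha))

lemma conjPart_pred (φ : Multiset ℕ+) (a : ℕ+) :
    φ.conjPart ((a : ℕ) - 1) = φ.count a + φ.conjPart a := by
  induction φ using Multiset.induction_on with
  | empty => simp
  | cons b φ ih =>
    have ha : 0 < (a : ℕ) := a.pos
    have hab : a = b ↔ (a : ℕ) = b := PNat.coe_inj.symm
    rw [conjPart_cons, conjPart_cons, count_cons, ih]
    by_cases h : (a : ℕ) = b <;> simp only [hab, h, if_true, if_false] <;> split_ifs <;> omega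

lemma conjPart_injective : Function.Injective conjPart := fun φ₁ φ₂ h =>
  Multiset.ext.2 fun a => by
    have h₁ := φ₁.conjPart_pred a
    have h₂ := φ₂.conjPart_pred a
    rw [h] at h₁
    omega

lemma exists_conjPart_eq {c : ℕ → ℕ} (hc : Antitone c) {N : ℕ} (hN : c N = 0) :
    ∃ φ : Multiset ℕ+, φ.conjPart = c := by
  induction N generalizing c with
  | zero => exact ⟨0, funext fun j => by simpa using (Nat.le_zero.1 (hN ▸ hc j.zero_le)).symm⟩
  | succ N ih =>
    obtain ⟨φ, hφ⟩ := ih (c := fun j => c j - c N) (fun i j hij => Nat.sub_le_sub_right (hc hij) _)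
      (Nat.sub_self _)
    refine ⟨φ + replicate (c N) N.succPNat, funext fun j => ?_⟩
    have : N < j → c j = 0 := fun h => Nat.le_zero.1 (hN ▸ hc h)
    have : j ≤ N → c N ≤ c j := fun h => hc h
    simp only [conjPart_add, Pi.add_apply, hφ, conjPart_replicate, Nat.succPNat_coe,
      Nat.lt_succ_iff]
    split_ifs <;> omega

lemma lt_nthPart_succ_iff (ψ : Multiset ℕ+) (v p : ℕ) :
    v < ψ.nthPart (p + 1) ↔ p < ψ.conjPart v := by
  have hsorted : ((ψ.map ((↑) : ℕ+ → ℕ)).sort (· ≤ ·)).reverse.Pairwise (· ≥ ·) :=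
    List.pairwise_reverse.2 (pairwise_sort _ _)
  rw [nthPart, Nat.add_sub_cancel, hsorted.lt_getD_iff_lt_countP, List.countP_reverse,
    ← coe_countP, sort_eq, countP_map]
  simp [conjPart]

lemma nthPart_succ_eq_iff (ψ : Multiset ℕ+) (p w : ℕ) :
    ψ.nthPart (p + 1) = w ↔ ψ.conjPart w ≤ p ∧ (w = 0 ∨ p < ψ.conjPart (w - 1)) := by
  have h₁ := ψ.lt_nthPart_succ_iff w p
  have h₂ := ψ.lt_nthPart_succ_iff (w - 1) p
  constructor
  · rintro rfl; omega
  · rintro ⟨hw, hw'⟩; omega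

end Multiset

section Blocks

variable {q : ℕ}

def blockSum (q : ℕ) (c : ℕ → ℕ) (v : ℕ) : ℕ := ∑ i ∈ range q, c (v * q + i)

lemma blockSum_add (c₁ c₂ : ℕ → ℕ) : blockSum q (c₁ + c₂) = blockSum q c₁ + blockSum q c₂ := by
  funext v
  simp [blockSum, sum_add_distrib]

-- The block sum lies between `c (v q) + (q - 1) c (v q + q - 1)` and
-- `(q - 1) c (v q) + c (v q + q - 1)`; the end terms are moved across so that no coefficient
-- `q - 1` appears and the bounds also hold for `q = 0`.
lemma blockSum_add_le {c : ℕ → ℕ} (hc : Antitone c) (v : ℕ) :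
    blockSum q c v + c (v * q) ≤ q * c (v * q) + c (v * q + (q - 1)) := by
  cases q with
  | zero => simp [blockSum]
  | succ n =>
    have h := sum_le_card_nsmul (range n) (fun i => c (v * (n + 1) + i)) (c (v * (n + 1)))
      fun i _ => hc (Nat.le_add_right _ _)
    simp only [card_range, smul_eq_mul] at h
    rw [blockSum, sum_range_succ, Nat.add_sub_cancel, add_mul, one_mul]
    omega

lemma le_blockSum_add {c : ℕ → ℕ} (hc : Antitone c) (v : ℕ) :
    c (v * q) + q * c (v * q + (q - 1)) ≤ blockSum q c v + c (v * q + (q - 1)) := by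
  cases q with
  | zero => simp [blockSum]
  | succ n =>
    have h := card_nsmul_le_sum (range n) (fun i => c (v * (n + 1) + (i + 1)))
      (c (v * (n + 1) + n)) fun i hi => hc (by simp at hi; omega)
    simp only [card_range, smul_eq_mul] at h
    rw [blockSum, sum_range_succ', Nat.add_sub_cancel, add_mul, one_mul, add_zero]
    omega

def ofBlocks (q : ℕ) (g : ℕ → ℕ → ℕ) (j : ℕ) : ℕ := g (j / q) (j % q)

lemma ofBlocks_mul_add (g : ℕ → ℕ → ℕ) (v : ℕ) {i : ℕ} (hi : i < q) :
    ofBlocks q g (v * q + i) = g v i := by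
  have hq : 0 < q := by omega
  rw [ofBlocks, add_comm, Nat.add_mul_div_right _ _ hq, Nat.div_eq_of_lt hi, zero_add,
    Nat.add_mul_mod_self_right, Nat.mod_eq_of_lt hi]

lemma blockSum_ofBlocks (g : ℕ → ℕ → ℕ) (v : ℕ) :
    blockSum q (ofBlocks q g) v = ∑ i ∈ range q, g v i :=
  sum_congr rfl fun _ hi => ofBlocks_mul_add g v (mem_range.1 hi)

lemma antitone_ofBlocks (hq : 0 < q) {g : ℕ → ℕ → ℕ}
    (hin : ∀ v i, i + 1 < q → g v (i + 1) ≤ g v i) (hout : ∀ v, g (v + 1) 0 ≤ g v (q - 1)) :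
    Antitone (ofBlocks q g) := by
  refine antitone_nat_of_succ_le fun j => ?_
  obtain ⟨v, i, hi, rfl⟩ : ∃ v i, i < q ∧ j = v * q + i :=
    ⟨j / q, j % q, Nat.mod_lt j hq, (Nat.div_add_mod' j q).symm⟩
  by_cases hi' : i + 1 < q
  · rw [add_assoc, ofBlocks_mul_add g v hi', ofBlocks_mul_add g v hi]
    exact hin v i hi'
  · have hj : v * q + i + 1 = (v + 1) * q + 0 := by rw [add_mul]; omega
    rw [hj, ofBlocks_mul_add g _ hq, ofBlocks_mul_add g v hi, show i = q - 1 by omega]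
    exact hout v

/-- Entry `i` of the filling of `q` slots by a total of `m` in which any two entries differ by at
most one, the larger ones first. -/
def balancedFill (q m i : ℕ) : ℕ := (m + (q - 1 - i)) / q

lemma sum_balancedFill (hq : 0 < q) (m : ℕ) : ∑ i ∈ range q, balancedFill q m i = m := by
  rw [← sum_range_reflect]
  refine (sum_congr rfl fun i hi => ?_).trans (Nat.sum_range_add_div hq m)
  rw [balancedFill, Nat.sub_sub_self (by simp at hi; omega)]

lemma balancedFill_succ_le (m i : ℕ) : balancedFill q m (i + 1) ≤ balancedFill q m i :=
  Nat.div_le_div_right (by omega)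

def balanced (q : ℕ) (M : ℕ → ℕ) : ℕ → ℕ := ofBlocks q fun v => balancedFill q (M v)

lemma blockSum_balanced (hq : 0 < q) (M : ℕ → ℕ) : blockSum q (balanced q M) = M :=
  funext fun v => (blockSum_ofBlocks _ v).trans (sum_balancedFill hq (M v))

lemma balanced_mul_le (hq : 0 < q) (M : ℕ → ℕ) (v : ℕ) :
    balanced q M (v * q) ≤ balanced q M (v * q + (q - 1)) + 1 := by
  rw [← add_zero (v * q), balanced, ofBlocks_mul_add _ _ hq, add_zero,
    ofBlocks_mul_add _ _ (by omega : q - 1 < q), balancedFill, balancedFill, Nat.sub_self,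
    add_zero, ← Nat.add_div_right _ hq]
  exact Nat.div_le_div_right (by omega)

/-- With `M` the block sums, `⌈M (v+1) / q⌉ ≤ c ((v+1) q) ≤ ⌊M v / q⌋`. -/
lemma balancedFill_blockSum_succ_le {c : ℕ → ℕ} (hq : 0 < q) (hc : Antitone c) (v : ℕ) :
    balancedFill q (blockSum q c (v + 1)) 0 ≤ balancedFill q (blockSum q c v) (q - 1) := by
  have h₁ := blockSum_add_le (q := q) hc (v + 1)
  have h₂ := le_blockSum_add (q := q) hc v
  have h₃ : c ((v + 1) * q + (q - 1)) ≤ c ((v + 1) * q) := hc (Nat.le_add_right _ _)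
  have h₄ : c ((v + 1) * q) ≤ c (v * q + (q - 1)) := hc (by rw [add_mul]; omega)
  have h₅ : c (v * q + (q - 1)) ≤ c (v * q) := hc (Nat.le_add_right _ _)
  have h₆ := Nat.mul_le_mul_left q h₄
  rw [balancedFill, balancedFill, Nat.sub_self, add_zero, Nat.sub_zero]
  calc (blockSum q c (v + 1) + (q - 1)) / q ≤ c ((v + 1) * q) := by
        rw [← Nat.lt_succ_iff, Nat.div_lt_iff_lt_mul hq, Nat.succ_mul, mul_comm]; omega
    _ ≤ blockSum q c v / q := by rw [Nat.le_div_iff_mul_le hq, mul_comm]; omega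

lemma antitone_balanced {c : ℕ → ℕ} (hq : 0 < q) (hc : Antitone c) :
    Antitone (balanced q (blockSum q c)) :=
  antitone_ofBlocks hq (fun _ _ _ => balancedFill_succ_le _ _)
    (balancedFill_blockSum_succ_le hq hc)

lemma Antitone.eq_balancedFill {f : ℕ → ℕ} (hf : Antitone f) {n i : ℕ} (hi : i < n)
    (h : f 0 ≤ f (n - 1) + 1) : f i = balancedFill n (∑ j ∈ range n, f j) i := by
  have h₀ := hf (Nat.zero_le i)
  have hlo : ∀ j ∈ range n, f i ≤ f j + if i < j then 1 else 0 := fun j hj => by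
    have := hf (show j ≤ n - 1 by simp at hj; omega)
    split_ifs with hij
    · omega
    · exact (hf (Nat.le_of_not_lt hij)).trans (Nat.le_add_right _ _)
  have hhi : ∀ j ∈ range n, f j ≤ f i + if j < i then 1 else 0 := fun j hj => by
    have := hf (show i ≤ n - 1 by omega)
    have := hf (Nat.zero_le j)
    split_ifs with hji
    · omega
    · exact (hf (Nat.le_of_not_lt hji)).trans (Nat.le_add_right _ _)
  have s₁ := sum_le_sum hlo
  have s₂ := sum_le_sum hhi
  rw [sum_add_distrib, sum_boole, show (range n).filter (i < ·) = Ioo i n by ext; simp; omega]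
    at s₁
  rw [sum_add_distrib, sum_boole, show (range n).filter (· < i) = range i by ext; simp; omega]
    at s₂
  simp only [sum_const, card_range, smul_eq_mul, Nat.card_Ioo, Nat.cast_id] at s₁ s₂
  refine (Nat.div_eq_of_lt_le ?_ ?_).symm
  · rw [mul_comm]; omega
  · rw [Nat.succ_mul, mul_comm]; omega

lemma eq_balanced_of_le_succ {c : ℕ → ℕ} (hq : 0 < q) (hc : Antitone c)
    (h : ∀ v, c (v * q) ≤ c (v * q + (q - 1)) + 1) : c = balanced q (blockSum q c) := by
  funext j
  have hf : Antitone fun i => c (j / q * q + i) :=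
    hc.comp_monotone fun _ _ h => Nat.add_le_add_left h _
  calc c j = c (j / q * q + j % q) := by rw [Nat.div_add_mod']
    _ = _ := hf.eq_balancedFill (Nat.mod_lt j hq) (h (j / q))

/-- Entry `i` of the filling of slots by values in `[a, a + D]` that stacks the excess `X` over
`a` into the first slots. -/
def greedyFill (a D X i : ℕ) : ℕ := a + min D (X - i * D)

lemma sum_greedyFill (a D X n : ℕ) :
    ∑ i ∈ range n, greedyFill a D X i = n * a + min (n * D) X := by
  induction n with
  | zero => simp
  | succ n ih =>
    rw [sum_range_succ, ih, greedyFill, add_mul, add_mul, one_mul, one_mul]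
    omega

lemma greedyFill_succ_le (a D X i : ℕ) : greedyFill a D X (i + 1) ≤ greedyFill a D X i := by
  unfold greedyFill
  gcongr
  omega

lemma greedyFill_add_two_le (a : ℕ) {q D X : ℕ} (hq : 2 ≤ q) (hD : 2 ≤ D) (hX : 2 ≤ X)
    (hXD : X + 2 ≤ q * D) :
    greedyFill a D X (q - 1) + 2 ≤ greedyFill a D X 0 := by
  have hD' : D ≤ (q - 1) * D := Nat.le_mul_of_pos_left D (by omega)
  have hqD : q * D = (q - 1) * D + D := by rw [← Nat.succ_mul]; congr; omega
  simp only [greedyFill, zero_mul, Nat.sub_zero]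
  omega

/-- `M r` splits into `q` entries in `[a, u]` whose first exceeds the last by two, and the
neighbouring block sums leave room for entries `a` after block `r` and `u` before it. -/
def SpreadAdmissible (q : ℕ) (M : ℕ → ℕ) (r : ℕ) : Prop :=
  ∃ a u, a + 2 ≤ u ∧ M (r + 1) ≤ a * q ∧ a * q + 2 ≤ M r ∧ M r + 2 ≤ u * q ∧
    (r = 0 ∨ u * q ≤ M (r - 1))

lemma spreadAdmissible_blockSum {c : ℕ → ℕ} (hc : Antitone c) {v : ℕ}
    (hv : c (v * q + (q - 1)) + 2 ≤ c (v * q)) : SpreadAdmissible q (blockSum q c) v := by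
  have hv₁ := blockSum_add_le (q := q) hc v
  have hv₂ := le_blockSum_add (q := q) hc v
  refine ⟨c (v * q + (q - 1)), c (v * q), hv, ?_, by rw [mul_comm]; omega,
    by rw [mul_comm]; omega, ?_⟩
  · have h₁ := blockSum_add_le (q := q) hc (v + 1)
    have h₂ : c ((v + 1) * q + (q - 1)) ≤ c ((v + 1) * q) := hc (Nat.le_add_right _ _)
    have h₃ := Nat.mul_le_mul_left q (hc (show v * q + (q - 1) ≤ (v + 1) * q by
      rw [add_mul]; omega))
    rw [mul_comm]
    omega
  · rcases v with _ | v
    · exact Or.inl rfl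
    · have h₁ := le_blockSum_add (q := q) hc v
      have h₂ : c (v * q + (q - 1)) ≤ c (v * q) := hc (Nat.le_add_right _ _)
      have h₃ := Nat.mul_le_mul_left q (hc (show v * q + (q - 1) ≤ (v + 1) * q by
        rw [add_mul]; omega))
      right
      rw [mul_comm, Nat.add_sub_cancel]
      omega

/-- Refill block `r` greedily between the neighbouring balanced blocks. -/
lemma exists_antitone_blockSum_eq_of_spreadAdmissible {c : ℕ → ℕ} {r : ℕ} (hq : 2 ≤ q)
    (hc : Antitone c) (h : SpreadAdmissible q (blockSum q c) r) :
    ∃ s : ℕ → ℕ, Antitone s ∧ blockSum q s = blockSum q c ∧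
      s (r * q + (q - 1)) + 2 ≤ s (r * q) := by
  obtain ⟨a, u, hau, h₁, h₂, h₃, h₄⟩ := h
  set M := blockSum q c
  have hX : M r - a * q + 2 ≤ q * (u - a) := by
    rw [Nat.mul_sub, mul_comm q a, mul_comm q u]; omega
  let g := Function.update (fun v => balancedFill q (M v)) r
    (greedyFill a (u - a) (M r - a * q))
  have hg : ∀ v i, g v i = if v = r then greedyFill a (u - a) (M r - a * q) i
      else balancedFill q (M v) i := fun v i => by
    by_cases hv : v = r <;> simp [g, hv]
  refine ⟨ofBlocks q g, antitone_ofBlocks (by omega) (fun v i _ => ?_) (fun v => ?_),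
    funext fun v => ?_, ?_⟩
  · rw [hg, hg]
    split_ifs
    exacts [greedyFill_succ_le .., balancedFill_succ_le ..]
  · rw [hg, hg]
    split_ifs with hv hv' hv'
    · omega
    · rw [balancedFill, Nat.sub_self, add_zero, Nat.le_div_iff_mul_le (by omega),
        show v = r - 1 by omega]
      simp only [greedyFill]
      refine le_trans (Nat.mul_le_mul_right q (show _ ≤ u by omega)) ?_
      omega
    · rw [balancedFill, Nat.sub_zero, hv', ← Nat.lt_succ_iff, Nat.div_lt_iff_lt_mul
        (by omega), Nat.succ_mul]
      have : a * q ≤ greedyFill a (u - a) (M r - a * q) (q - 1) * q :=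
        Nat.mul_le_mul_right q (Nat.le_add_right _ _)
      omega
    · exact balancedFill_blockSum_succ_le (by omega) hc v
  · rw [blockSum_ofBlocks]
    simp only [hg]
    split_ifs with hv
    · rw [sum_greedyFill, hv, mul_comm q a]; omega
    · exact sum_balancedFill (by omega) _
  · rw [← add_zero (r * q), ofBlocks_mul_add _ _ (by omega), add_zero,
      ofBlocks_mul_add _ _ (by omega), hg, hg, if_pos rfl, if_pos rfl]
    exact greedyFill_add_two_le a hq (by omega) (by omega) hX

end Blocks

section Zeta

variable {q : ℕ}

lemma conjPart_zetaPiece (hq : 0 < q) (a : ℕ+) (v : ℕ) :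
    (zetaPiece q a).conjPart v = min q ((a : ℕ) - v * q) := by
  have hpiece : (zetaPiece q a).conjPart v =
      (if v < (a : ℕ) / q + 1 then (a : ℕ) % q else 0) +
        if v < (a : ℕ) / q then q - (a : ℕ) % q else 0 := by
    rw [zetaPiece, Multiset.conjPart_add, Pi.add_apply]
    congr 1
    · exact Multiset.conjPart_replicate _ _ _
    · by_cases h : 0 < (a : ℕ) / q
      · rw [dif_pos h]
        exact Multiset.conjPart_replicate _ _ _
      · rw [dif_neg h, if_neg (by omega)]
        rfl
  have hdiv := Nat.div_add_mod' (a : ℕ) q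
  have hmod := Nat.mod_lt (a : ℕ) hq
  rw [hpiece]
  rcases lt_trichotomy v ((a : ℕ) / q) with h | rfl | h
  · have := Nat.mul_le_mul_right q h
    rw [Nat.succ_mul] at this
    simp only [h, if_true, show v < (a : ℕ) / q + 1 by omega]
    omega
  · simp only [lt_irrefl, lt_add_one, if_true, if_false]
    omega
  · have := Nat.mul_le_mul_right q h
    rw [Nat.succ_mul] at this
    simp only [show ¬v < (a : ℕ) / q + 1 by omega, show ¬v < (a : ℕ) / q by omega, if_false]
    omega

lemma blockSum_conjPart_singleton (a : ℕ+) (v : ℕ) :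
    blockSum q ({a} : Multiset ℕ+).conjPart v = min q ((a : ℕ) - v * q) := by
  simp only [blockSum, ← Multiset.cons_zero, Multiset.conjPart_cons, Multiset.conjPart_zero,
    Pi.zero_apply, zero_add]
  rw [sum_boole, show (range q).filter (fun i => v * q + i < a) = range (min q (a - v * q)) by
    ext; simp; omega]
  simp

lemma conjPart_zetaPart (hq : 0 < q) (φ : Multiset ℕ+) :
    (zetaPart q φ).conjPart = blockSum q φ.conjPart := by
  induction φ using Multiset.induction_on with
  | empty => funext v; simp [zetaPart, blockSum]
  | cons a φ ih =>
    rw [zetaPart, Multiset.cons_bind, Multiset.conjPart_add, ← zetaPart, ih,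
      ← Multiset.singleton_add, Multiset.conjPart_add, blockSum_add]
    congr 1
    funext v
    rw [conjPart_zetaPiece hq, blockSum_conjPart_singleton]

lemma zetaPart_eq_iff (hq : 0 < q) {φ ψ : Multiset ℕ+} :
    zetaPart q φ = ψ ↔ blockSum q φ.conjPart = ψ.conjPart := by
  rw [← conjPart_zetaPart hq, Multiset.conjPart_injective.eq_iff]

lemma exists_zetaPart_eq_of_blockSum (hq : 0 < q) {s : ℕ → ℕ} (hs : Antitone s)
    {ψ : Multiset ℕ+} (h : blockSum q s = ψ.conjPart) :
    ∃ φ, zetaPart q φ = ψ ∧ φ.conjPart = s := by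
  obtain ⟨N, hN⟩ := ψ.exists_conjPart_eq_zero
  have h₁ := le_blockSum_add (q := q) hs N
  have h₂ : s (N * q + (q - 1)) ≤ s (N * q) := hs (Nat.le_add_right _ _)
  rw [h, hN] at h₁
  have hzero : s (N * q + (q - 1)) = 0 := by
    have : q * s (N * q + (q - 1)) = 0 := by omega
    simpa [hq.ne'] using this
  obtain ⟨φ, hφ⟩ := Multiset.exists_conjPart_eq hs hzero
  exact ⟨φ, (zetaPart_eq_iff hq).2 (hφ ▸ h), hφ⟩

end Zeta

section Preimages

variable {q : ℕ} {ψ : Multiset ℕ+}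

/-- Preimages without a block of spread two are balanced, and the balanced preimage has none. -/
theorem exists_ne_zetaPart_eq_iff (hq : 0 < q) (hψ : ∃ φ, zetaPart q φ = ψ) :
    (∃ φ₁ φ₂ : Multiset ℕ+, φ₁ ≠ φ₂ ∧ zetaPart q φ₁ = ψ ∧ zetaPart q φ₂ = ψ) ↔
      ∃ φ v, zetaPart q φ = ψ ∧ φ.conjPart (v * q + (q - 1)) + 2 ≤ φ.conjPart (v * q) := by
  constructor
  · rintro ⟨φ₁, φ₂, hne, h₁, h₂⟩
    by_contra! hnarrow
    have hbalanced : ∀ φ, zetaPart q φ = ψ → φ.conjPart = balanced q ψ.conjPart := fun φ hφ => by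
      rw [← hφ, conjPart_zetaPart hq]
      exact eq_balanced_of_le_succ hq φ.antitone_conjPart fun v => by
        have := hnarrow φ v hφ
        omega
    exact hne (Multiset.conjPart_injective ((hbalanced φ₁ h₁).trans (hbalanced φ₂ h₂).symm))
  · rintro ⟨φ, v, hφ, hv⟩
    obtain ⟨φ₀, rfl⟩ := hψ
    have hanti : Antitone (balanced q (zetaPart q φ₀).conjPart) := by
      rw [conjPart_zetaPart hq]
      exact antitone_balanced hq φ₀.antitone_conjPart
    obtain ⟨φ', hφ', hφ'c⟩ := exists_zetaPart_eq_of_blockSum hq hanti (blockSum_balanced hq _)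
    refine ⟨φ, φ', fun h => ?_, hφ, hφ'⟩
    have := balanced_mul_le hq (zetaPart q φ₀).conjPart v
    rw [← hφ'c, ← h] at this
    omega

theorem exists_zetaPart_eq_spread_iff (hq : 2 ≤ q) (hψ : ∃ φ, zetaPart q φ = ψ) :
    (∃ φ v, zetaPart q φ = ψ ∧ φ.conjPart (v * q + (q - 1)) + 2 ≤ φ.conjPart (v * q)) ↔
      ∃ r, SpreadAdmissible q ψ.conjPart r := by
  constructor
  · rintro ⟨φ, v, rfl, hv⟩
    refine ⟨v, ?_⟩
    rw [conjPart_zetaPart (by omega)]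
    exact spreadAdmissible_blockSum φ.antitone_conjPart hv
  · rintro ⟨r, hr⟩
    obtain ⟨φ₀, rfl⟩ := hψ
    rw [conjPart_zetaPart (by omega)] at hr
    obtain ⟨s, hs, hsum, hspread⟩ :=
      exists_antitone_blockSum_eq_of_spreadAdmissible hq φ₀.antitone_conjPart hr
    obtain ⟨φ, hφ, rfl⟩ := exists_zetaPart_eq_of_blockSum (by omega) hs
      (hsum.trans (conjPart_zetaPart (by omega) φ₀).symm)
    exact ⟨φ, r, hφ, hspread⟩

theorem exists_spreadAdmissible_conjPart_iff (hq : 0 < q) :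
    (∃ r, SpreadAdmissible q ψ.conjPart r) ↔
      ∃ r i₁ i₂ : ℕ, 0 < i₁ ∧ i₁ < i₂ ∧
        ψ.nthPart ((i₁ - 1) * q + 1) = r + 1 ∧ ψ.nthPart ((i₁ - 1) * q + 2) = r + 1 ∧
        ψ.nthPart (i₂ * q - 1) = r ∧ ψ.nthPart (i₂ * q) = r := by
  have key : ∀ r a u, a + 2 ≤ u →
      (ψ.nthPart (a * q + 1) = r + 1 ∧ ψ.nthPart (a * q + 2) = r + 1 ∧
        ψ.nthPart (u * q - 1) = r ∧ ψ.nthPart (u * q) = r ↔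
      ψ.conjPart (r + 1) ≤ a * q ∧ a * q + 2 ≤ ψ.conjPart r ∧ ψ.conjPart r + 2 ≤ u * q ∧
        (r = 0 ∨ u * q ≤ ψ.conjPart (r - 1))) := by
    intro r a u hau
    obtain ⟨p, hp⟩ : ∃ p, u * q = p + 2 :=
      ⟨u * q - 2, by have := Nat.mul_le_mul (show 2 ≤ u by omega) hq; omega⟩
    rw [hp, show a * q + 2 = a * q + 1 + 1 from rfl, show p + 2 - 1 = p + 1 from rfl,
      show p + 2 = p + 1 + 1 from rfl]
    simp only [Multiset.nthPart_succ_eq_iff, Nat.add_sub_cancel, Nat.add_eq_zero_iff,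
      one_ne_zero, and_false, false_or]
    omega
  constructor
  · rintro ⟨r, a, u, hau, h⟩
    exact ⟨r, a + 1, u, a.succ_pos, by omega, by simpa using (key r a u hau).2 h⟩
  · rintro ⟨r, i₁, i₂, hi₁, hi₁₂, h⟩
    obtain ⟨a, rfl⟩ := Nat.exists_eq_add_of_lt hi₁
    exact ⟨r, a, i₂, by omega, (key r a i₂ (by omega)).1 (by simpa using h)⟩

end Preimages

/-- For `q ≥ 2`, a partition `ψ` in the image of `ζ_q` has more than one preimage under
`ζ_q` if and only if there exist `r ≥ 0` and `0 < i₁ < i₂` with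
`ψ_{(i₁-1)q+1} = ψ_{(i₁-1)q+2} = r + 1` and `ψ_{i₂q-1} = ψ_{i₂q} = r`. -/
theorem zetaPart_preimage_not_unique_iff (q : ℕ) (hq : 2 ≤ q) (ψ : Multiset ℕ+)
    (hmem : ∃ φ : Multiset ℕ+, zetaPart q φ = ψ) :
    (∃ φ₁ φ₂ : Multiset ℕ+, φ₁ ≠ φ₂ ∧ zetaPart q φ₁ = ψ ∧ zetaPart q φ₂ = ψ) ↔
      ∃ r i₁ i₂ : ℕ, 0 < i₁ ∧ i₁ < i₂ ∧
        ψ.nthPart ((i₁ - 1) * q + 1) = r + 1 ∧ ψ.nthPart ((i₁ - 1) * q + 2) = r + 1 ∧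
        ψ.nthPart (i₂ * q - 1) = r ∧ ψ.nthPart (i₂ * q) = r := by
  rw [exists_ne_zetaPart_eq_iff (by omega) hmem, exists_zetaPart_eq_spread_iff hq hmem,
    exists_spreadAdmissible_conjPart_iff (by omega)]
end

section
/- Let q ≥ 2 and m ≥ 2. Then the restriction ζ_q : Part_m → Part_m of the map ζ_q to partitions of m is not injective; in fact the preimage of the partition m·[1] = [1,1,...,1] consists exactly of all partitions φ of m with φ_i ≤ q for all i, and there are at least two such partitions. -/
/-! Writing `a = k q + l`, the piece `ζ_q [a]` has total `a` and consists of `l` parts `k + 1`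
and `q - l` parts `k`; so it is made of `1`s exactly when `a ≤ q`. Since `ζ_q` is additive and
preserves totals, `ζ_q φ = m·[1]` iff `φ ⊢ m` has all parts `≤ q`, and for `m ≥ 2`, `q ≥ 2` both
`m·[1]` and `[2] + (m - 2)·[1]` are such partitions. -/

lemma map_coe_zetaPiece (q : ℕ) (a : ℕ+) :
    (zetaPiece q a).map ((↑) : ℕ+ → ℕ) = Multiset.replicate ((a : ℕ) % q) ((a : ℕ) / q + 1) +
      if 0 < (a : ℕ) / q then Multiset.replicate (q - (a : ℕ) % q) ((a : ℕ) / q) else 0 := by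
  unfold zetaPiece
  split_ifs <;> rw [Multiset.map_add] <;> congr 1 <;> exact Multiset.map_replicate _ _ _

lemma sum_coe_zetaPiece (q : ℕ) (a : ℕ+) : ((zetaPiece q a).map ((↑) : ℕ+ → ℕ)).sum = a := by
  have hdiv := Nat.div_add_mod (a : ℕ) q
  rw [map_coe_zetaPiece]
  split_ifs with hk
  · have hl : (a : ℕ) % q ≤ q := (Nat.mod_lt _ (Nat.pos_of_ne_zero (by rintro rfl; simp at hk))).le
    generalize (a : ℕ) / q = k, (a : ℕ) % q = l at *
    obtain ⟨d, rfl⟩ := Nat.exists_eq_add_of_le hl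
    simp only [Multiset.sum_add, Multiset.sum_replicate, smul_eq_mul, Nat.add_sub_cancel_left]
    linarith
  · rw [Nat.eq_zero_of_not_pos hk] at hdiv ⊢
    simpa using hdiv

lemma forall_mem_zetaPiece_eq_one_iff {q : ℕ} (hq : 0 < q) (a : ℕ+) :
    (∀ c ∈ zetaPiece q a, c = 1) ↔ (a : ℕ) ≤ q := by
  have hdiv := Nat.div_add_mod (a : ℕ) q
  have hl : (a : ℕ) % q < q := Nat.mod_lt _ hq
  have hcoe : (∀ c ∈ zetaPiece q a, c = 1) ↔ ∀ n ∈ (zetaPiece q a).map ((↑) : ℕ+ → ℕ), n = 1 := by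
    simp
  rw [hcoe, map_coe_zetaPiece]
  generalize (a : ℕ) / q = k, (a : ℕ) % q = l at *
  -- the values of `q * k` that `omega` needs, as it cannot multiply
  have hqk : (k = 0 ∧ q * k = 0) ∨ (k = 1 ∧ q * k = q) ∨ (2 ≤ k ∧ 2 * q ≤ q * k) := by
    rcases k with _ | _ | k
    · simp
    · simp
    · exact .inr (.inr ⟨by omega, by nlinarith⟩)
  split_ifs <;>
    simp only [Multiset.mem_add, Multiset.mem_replicate, Multiset.notMem_zero, or_false, or_imp,
      and_imp, forall_and, forall_eq_apply_imp_iff, ne_eq] <;>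
    omega

lemma sum_coe_zetaPart (q : ℕ) (φ : Multiset ℕ+) :
    ((zetaPart q φ).map ((↑) : ℕ+ → ℕ)).sum = (φ.map ((↑) : ℕ+ → ℕ)).sum := by
  simp only [zetaPart, Multiset.map_bind, Multiset.sum_bind, sum_coe_zetaPiece]

lemma PNat.multiset_eq_replicate_one_iff (s : Multiset ℕ+) (m : ℕ) :
    s = Multiset.replicate m 1 ↔ (s.map ((↑) : ℕ+ → ℕ)).sum = m ∧ ∀ b ∈ s, b = 1 := by
  constructor
  · rintro rfl
    simp [Multiset.mem_replicate]
  · rintro ⟨hsum, hone⟩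
    refine Multiset.eq_replicate.mpr ⟨?_, hone⟩
    rw [Multiset.eq_replicate_card.mpr hone] at hsum
    simpa using hsum

lemma Multiset.forall_mem_bind {α β : Type*} {s : Multiset α} {f : α → Multiset β} {p : β → Prop} :
    (∀ b ∈ s.bind f, p b) ↔ ∀ a ∈ s, ∀ b ∈ f a, p b := by
  simp only [Multiset.mem_bind, forall_exists_index, and_imp]
  exact ⟨fun h a ha b hb => h b a ha hb, fun h b a ha hb => h a ha b hb⟩

theorem zetaPart_eq_replicate_one_iff {q : ℕ} (hq : 0 < q) (φ : Multiset ℕ+) (m : ℕ) :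
    zetaPart q φ = Multiset.replicate m 1 ↔
      (φ.map ((↑) : ℕ+ → ℕ)).sum = m ∧ ∀ b ∈ φ, (b : ℕ) ≤ q := by
  rw [PNat.multiset_eq_replicate_one_iff, sum_coe_zetaPart, zetaPart, Multiset.forall_mem_bind]
  exact and_congr_right' (forall₂_congr fun a _ => forall_mem_zetaPiece_eq_one_iff hq a)

lemma exists_ne_partitions_of_parts_le_two {m : ℕ} (hm : 2 ≤ m) :
    ∃ φ₁ φ₂ : Multiset ℕ+, φ₁ ≠ φ₂ ∧
      (φ₁.map ((↑) : ℕ+ → ℕ)).sum = m ∧ (φ₂.map ((↑) : ℕ+ → ℕ)).sum = m ∧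
      (∀ b ∈ φ₁, (b : ℕ) ≤ 2) ∧ ∀ b ∈ φ₂, (b : ℕ) ≤ 2 := by
  refine ⟨Multiset.replicate m 1, 2 ::ₘ Multiset.replicate (m - 2) 1, ?_, by simp, ?_, ?_, ?_⟩
  · intro h
    have : (2 : ℕ+) ∈ Multiset.replicate m 1 := h ▸ Multiset.mem_cons_self _ _
    simp [Multiset.mem_replicate] at this
  · simp only [Multiset.map_cons, PNat.val_ofNat, Multiset.map_replicate, Multiset.sum_cons,
      Multiset.sum_replicate, smul_eq_mul, mul_one]
    omega
  · simp [Multiset.mem_replicate]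
  · simp [Multiset.mem_replicate]

/-- For `q ≥ 2` and `m ≥ 2`, the preimage under `ζ_q` of the partition `m·[1]` consists
exactly of the partitions of `m` all of whose parts are at most `q`; there are at least
two of those, so `ζ_q` is not injective on partitions of `m`. -/
theorem zetaPart_not_injective (q m : ℕ) (hq : 2 ≤ q) (hm : 2 ≤ m) :
    (∀ φ : Multiset ℕ+, zetaPart q φ = Multiset.replicate m 1 ↔
        ((φ.map ((↑·) : ℕ+ → ℕ)).sum = m ∧ ∀ b ∈ φ, (b : ℕ) ≤ q)) ∧
      ∃ φ₁ φ₂ : Multiset ℕ+, φ₁ ≠ φ₂ ∧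
        (φ₁.map ((↑·) : ℕ+ → ℕ)).sum = m ∧ (φ₂.map ((↑·) : ℕ+ → ℕ)).sum = m ∧
        zetaPart q φ₁ = zetaPart q φ₂ := by
  have hq₀ : 0 < q := by omega
  refine ⟨fun φ => zetaPart_eq_replicate_one_iff hq₀ φ m, ?_⟩
  obtain ⟨φ₁, φ₂, hne, hsum₁, hsum₂, hle₁, hle₂⟩ := exists_ne_partitions_of_parts_le_two hm
  refine ⟨φ₁, φ₂, hne, hsum₁, hsum₂, ?_⟩
  rw [(zetaPart_eq_replicate_one_iff hq₀ φ₁ m).2 ⟨hsum₁, fun b hb => (hle₁ b hb).trans hq⟩,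
    (zetaPart_eq_replicate_one_iff hq₀ φ₂ m).2 ⟨hsum₂, fun b hb => (hle₂ b hb).trans hq⟩]
end
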